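/- arXiv:1808.06761 — 2 statements merged into one kernel-verified Lean document; each statement's English description precedes it below -/
import Mathlib

section
/- Let X be a nonnegative random variable. Then E[ln(1+X)] = ∫_0^∞ (e^{−z}/z)(1 − E[e^{−zX}]) dz, where both sides are interpreted as values in [0,∞]. -/
/-!
Differentiating in `x` shows `log (1 + x) = ∫₀ˣ (1 + t)⁻¹ dt = ∫₀ˣ ∫₀^∞ e^{-z(1+t)} dz dt`, and
integrating in `t` first turns this into the Frullani-type identity
`log (1 + x) = ∫₀^∞ (e^{-z}/z)(1 - e^{-zx}) dz` for `x ≥ 0`. Substituting `x = X ω` and applying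
Tonelli to exchange `∫ dμ` with `∫ dz` gives the theorem, since `E[1 - e^{-zX}] = 1 - E[e^{-zX}]`.
-/

open MeasureTheory Real Set

lemma lintegral_Ioc_ofReal_eq_ofReal_intervalIntegral {f : ℝ → ℝ} {a b : ℝ} (hab : a ≤ b)
    (hf : IntervalIntegrable f volume a b) (hf₀ : ∀ t ∈ Ioc a b, 0 ≤ f t) :
    ∫⁻ t in Ioc a b, ENNReal.ofReal (f t) = ENNReal.ofReal (∫ t in a..b, f t) := by
  rw [intervalIntegral.integral_of_le hab, ofReal_integral_eq_lintegral_ofReal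
    ((intervalIntegrable_iff_integrableOn_Ioc_of_le hab).1 hf)
    (ae_restrict_of_forall_mem measurableSet_Ioc hf₀)]

lemma lintegral_Ioi_exp_neg_mul {c : ℝ} (hc : 0 < c) :
    ∫⁻ z in Ioi 0, ENNReal.ofReal (exp (-z * c)) = ENNReal.ofReal c⁻¹ := by
  have hneg : -c < 0 := neg_neg_of_pos hc
  simp_rw [neg_mul_comm, mul_comm _ (-c)]
  rw [← ofReal_integral_eq_lintegral_ofReal (integrableOn_exp_mul_Ioi hneg 0)
    (.of_forall fun _ ↦ (exp_pos _).le), integral_exp_mul_Ioi hneg,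
    mul_zero, exp_zero, neg_div_neg_eq, one_div]

lemma integral_exp_neg_mul_one_add {z : ℝ} (hz : z ≠ 0) (x : ℝ) :
    ∫ t in 0..x, exp (-z * (1 + t)) = exp (-z) / z * (1 - exp (-z * x)) := by
  have hlin : ∀ t, -z * (1 + t) = -z * t + -z := fun t ↦ by ring
  simp_rw [hlin]
  rw [intervalIntegral.integral_comp_mul_add exp (neg_ne_zero.2 hz), integral_exp, smul_eq_mul,
    mul_zero, zero_add, exp_add]
  field_simp
  ring

lemma integral_inv_one_add {x : ℝ} (hx : 0 ≤ x) : ∫ t in 0..x, (1 + t)⁻¹ = log (1 + x) := by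
  rw [intervalIntegral.integral_comp_add_left (fun t ↦ t⁻¹), add_zero,
    integral_inv_of_pos one_pos (by linarith), div_one]

lemma ofReal_log_one_add_eq_lintegral {x : ℝ} (hx : 0 ≤ x) :
    ENNReal.ofReal (log (1 + x)) =
      ∫⁻ z in Ioi 0, ENNReal.ofReal (exp (-z) / z * (1 - exp (-z * x))) := by
  have hmeas : Measurable fun p : ℝ × ℝ ↦ ENNReal.ofReal (exp (-p.2 * (1 + p.1))) := by
    fun_prop
  calc ENNReal.ofReal (log (1 + x))
      = ∫⁻ t in Ioc 0 x, ENNReal.ofReal (1 + t)⁻¹ := by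
        rw [← integral_inv_one_add hx, lintegral_Ioc_ofReal_eq_ofReal_intervalIntegral hx]
        · refine ContinuousOn.intervalIntegrable (ContinuousOn.inv₀ (by fun_prop) fun t ht ↦ ?_)
          rw [uIcc_of_le hx] at ht
          linarith [ht.1]
        · intro t ht
          have := ht.1.le
          positivity
    _ = ∫⁻ t in Ioc 0 x, ∫⁻ z in Ioi 0, ENNReal.ofReal (exp (-z * (1 + t))) :=
        setLIntegral_congr_fun measurableSet_Ioc fun t ht ↦
          (lintegral_Ioi_exp_neg_mul (by linarith [ht.1])).symm
    _ = ∫⁻ z in Ioi 0, ∫⁻ t in Ioc 0 x, ENNReal.ofReal (exp (-z * (1 + t))) :=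
        lintegral_lintegral_swap hmeas.aemeasurable
    _ = ∫⁻ z in Ioi 0, ENNReal.ofReal (exp (-z) / z * (1 - exp (-z * x))) := by
        refine setLIntegral_congr_fun measurableSet_Ioi fun z hz ↦ ?_
        rw [lintegral_Ioc_ofReal_eq_ofReal_intervalIntegral hx
          ((by fun_prop : Continuous _).intervalIntegrable _ _) fun _ _ ↦ (exp_pos _).le,
          integral_exp_neg_mul_one_add (ne_of_gt hz)]

lemma ofReal_mul_one_sub_integral {Ω : Type*} [MeasurableSpace Ω] {μ : Measure Ω}
    [IsProbabilityMeasure μ] {f : Ω → ℝ} (hf : Integrable f μ) (hf₁ : ∀ᵐ ω ∂μ, f ω ≤ 1)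
    {c : ℝ} (hc : 0 ≤ c) :
    ENNReal.ofReal (c * (1 - ∫ ω, f ω ∂μ)) = ∫⁻ ω, ENNReal.ofReal (c * (1 - f ω)) ∂μ := by
  have hint : Integrable (fun ω ↦ c * (1 - f ω)) μ := ((integrable_const 1).sub hf).const_mul c
  rw [← ofReal_integral_eq_lintegral_ofReal hint
    (hf₁.mono fun ω h ↦ mul_nonneg hc (sub_nonneg.2 h)), integral_const_mul,
    integral_sub (integrable_const 1) hf]
  simp

/-- For a nonnegative random variable `X`,
`E[ln(1+X)] = ∫_0^∞ (e^{-z}/z)(1 - E[e^{-zX}]) dz`, both sides in `[0,∞]`. -/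
theorem lintegral_log_one_add_eq_integral_laplace
    {Ω : Type*} [MeasurableSpace Ω] (μ : Measure Ω) [IsProbabilityMeasure μ]
    (X : Ω → ℝ) (hX : Measurable X) (hpos : ∀ ω, 0 ≤ X ω) :
    ∫⁻ ω, ENNReal.ofReal (Real.log (1 + X ω)) ∂μ =
      ∫⁻ z in Set.Ioi (0 : ℝ),
        ENNReal.ofReal ((Real.exp (-z) / z) * (1 - ∫ ω, Real.exp (-z * X ω) ∂μ)) := by
  have hle : ∀ z ∈ Ioi (0 : ℝ), ∀ ω, exp (-z * X ω) ≤ 1 := fun z hz ω ↦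
    exp_le_one_iff.2 (mul_nonpos_of_nonpos_of_nonneg (neg_nonpos.2 (le_of_lt hz)) (hpos ω))
  have hmeas : Measurable fun p : Ω × ℝ ↦
      ENNReal.ofReal (exp (-p.2) / p.2 * (1 - exp (-p.2 * X p.1))) := by
    fun_prop
  calc ∫⁻ ω, ENNReal.ofReal (log (1 + X ω)) ∂μ
      = ∫⁻ ω, (∫⁻ z in Ioi 0, ENNReal.ofReal (exp (-z) / z * (1 - exp (-z * X ω)))) ∂μ :=
        lintegral_congr fun ω ↦ ofReal_log_one_add_eq_lintegral (hpos ω)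
    _ = ∫⁻ z in Ioi 0, ∫⁻ ω, ENNReal.ofReal (exp (-z) / z * (1 - exp (-z * X ω))) ∂μ :=
        lintegral_lintegral_swap hmeas.aemeasurable
    _ = _ := setLIntegral_congr_fun measurableSet_Ioi fun z hz ↦
        (ofReal_mul_one_sub_integral
          (.of_bound (by fun_prop) 1
            (.of_forall fun ω ↦ (norm_of_nonneg (exp_pos _).le).trans_le (hle z hz ω)))
          (.of_forall (hle z hz)) (div_nonneg (exp_pos _).le (le_of_lt hz))).symm
end

section
/- Let S and I be independent nonnegative random variables and let σ^2 > 0. Then the ergodic rate satisfies E[ln(1 + S/(I + σ^2))] = ∫_0^∞ (e^{−sσ^2}/s) · E[e^{−sI}] · (1 − E[e^{−sS}]) ds, where both sides are interpreted as values in [0,∞]. -/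
/-!
Frullani's integral gives, for `0 < a ≤ b`, with nonnegative integrands so that Tonelli applies,
`log (b / a) = ∫ₐᵇ dt / t = ∫ₐᵇ ∫₀^∞ e^{-st} ds dt = ∫₀^∞ (e^{-sa} - e^{-sb}) / s ds`.
With `a = I + σ²` and `b = S + I + σ²` the integrand is `e^{-sσ²} e^{-sI} (1 - e^{-sS}) / s`;
a second application of Tonelli moves the expectation inside, where independence factors
`E[e^{-sI} (1 - e^{-sS})]` into the product of Laplace transforms.
-/

open MeasureTheory ProbabilityTheory Real Set

lemma integral_exp_neg_mul {s : ℝ} (hs : s ≠ 0) (a b : ℝ) :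
    ∫ t in a..b, exp (-s * t) = (exp (-s * a) - exp (-s * b)) / s := by
  rw [intervalIntegral.integral_comp_mul_left (fun t => exp t) (neg_ne_zero.2 hs), integral_exp,
    smul_eq_mul, inv_neg, div_eq_inv_mul]
  ring

lemma lintegral_exp_neg_mul_Ioi {t : ℝ} (ht : 0 < t) :
    ∫⁻ s in Ioi 0, ENNReal.ofReal (exp (-s * t)) = ENNReal.ofReal t⁻¹ := by
  simp_rw [show ∀ s, -s * t = -t * s from fun s => by ring]
  rw [← ofReal_integral_eq_lintegral_ofReal (integrableOn_exp_mul_Ioi (neg_lt_zero.2 ht) 0)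
    (.of_forall fun s => (exp_pos _).le), integral_exp_mul_Ioi (neg_lt_zero.2 ht),
    mul_zero, exp_zero, neg_div_neg_eq, one_div]

lemma lintegral_inv_Ioc {a b : ℝ} (ha : 0 < a) (hab : a ≤ b) :
    ∫⁻ t in Ioc a b, ENNReal.ofReal t⁻¹ = ENNReal.ofReal (log (b / a)) := by
  have hint : IntervalIntegrable (fun t : ℝ => t⁻¹) volume a b :=
    intervalIntegral.intervalIntegrable_inv
      (fun t ht => (ha.trans_le (uIcc_of_le hab ▸ ht).1).ne') continuousOn_id
  rw [← ofReal_integral_eq_lintegral_ofReal hint.1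
    (ae_restrict_of_forall_mem measurableSet_Ioc fun t ht => inv_nonneg.2 (ha.trans ht.1).le),
    ← intervalIntegral.integral_of_le hab, integral_inv_of_pos ha (ha.trans_le hab)]

lemma ofReal_log_one_add_div_eq_lintegral {a x : ℝ} (ha : 0 < a) (hx : 0 ≤ x) :
    ENNReal.ofReal (log (1 + x / a)) =
      ∫⁻ s in Ioi 0, ENNReal.ofReal (exp (-s * a) * (1 - exp (-s * x)) / s) := by
  have hab : a ≤ a + x := le_add_of_nonneg_right hx
  have hslice : ∀ s ∈ Ioi (0 : ℝ), ENNReal.ofReal (exp (-s * a) * (1 - exp (-s * x)) / s) =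
      ∫⁻ t in Ioc a (a + x), ENNReal.ofReal (exp (-s * t)) := by
    intro s hs
    rw [← ofReal_integral_eq_lintegral_ofReal
      ((by fun_prop : Continuous fun t => exp (-s * t)).intervalIntegrable a (a + x)).1
      (.of_forall fun t => (exp_pos _).le),
      ← intervalIntegral.integral_of_le hab, integral_exp_neg_mul (ne_of_gt hs), mul_add,
      exp_add]
    congr 1
    ring
  calc ENNReal.ofReal (log (1 + x / a))
      = ∫⁻ t in Ioc a (a + x), ENNReal.ofReal t⁻¹ := by
        rw [lintegral_inv_Ioc ha hab, add_div, div_self ha.ne']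
    _ = ∫⁻ t in Ioc a (a + x), ∫⁻ s in Ioi 0, ENNReal.ofReal (exp (-s * t)) :=
        setLIntegral_congr_fun measurableSet_Ioc fun t ht =>
          (lintegral_exp_neg_mul_Ioi (ha.trans ht.1)).symm
    _ = ∫⁻ s in Ioi 0, ∫⁻ t in Ioc a (a + x), ENNReal.ofReal (exp (-s * t)) :=
        lintegral_lintegral_swap (by fun_prop)
    _ = _ := (setLIntegral_congr_fun measurableSet_Ioi hslice).symm

lemma exp_neg_mul_le_one {s x : ℝ} (hs : 0 ≤ s) (hx : 0 ≤ x) : exp (-s * x) ≤ 1 :=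
  exp_le_one_iff.2 (by nlinarith)

namespace ProbabilityTheory

variable {Ω : Type*} [MeasurableSpace Ω] {μ : Measure Ω}

lemma integrable_exp_neg_mul_of_nonneg [IsFiniteMeasure μ] {X : Ω → ℝ}
    (hX : AEMeasurable X μ) (hX0 : ∀ᵐ ω ∂μ, 0 ≤ X ω) {s : ℝ} (hs : 0 ≤ s) :
    Integrable (fun ω => exp (-s * X ω)) μ :=
  .of_bound (by fun_prop) 1 <| hX0.mono fun ω hω => by
    rw [norm_of_nonneg (exp_pos _).le]
    exact exp_neg_mul_le_one hs hω

lemma IndepFun.integral_mul_one_sub [IsProbabilityMeasure μ] {X Y : Ω → ℝ}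
    (h : IndepFun X Y μ) (hX : AEStronglyMeasurable X μ) (hY : Integrable Y μ) :
    ∫ ω, X ω * (1 - Y ω) ∂μ = (∫ ω, X ω ∂μ) * (1 - ∫ ω, Y ω ∂μ) := by
  have h' : IndepFun X (fun ω => 1 - Y ω) μ :=
    h.comp (φ := id) (ψ := fun y => 1 - y) measurable_id (by fun_prop)
  rw [h'.integral_fun_mul_eq_mul_integral hX (aestronglyMeasurable_const.sub hY.1),
    integral_sub (integrable_const 1) hY, integral_const, probReal_univ, one_smul]

lemma IndepFun.lintegral_ofReal_exp_neg_mul_mul_one_sub [IsProbabilityMeasure μ] {X Y : Ω → ℝ}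
    (h : IndepFun X Y μ) (hX : AEMeasurable X μ) (hY : AEMeasurable Y μ)
    (hX0 : ∀ᵐ ω ∂μ, 0 ≤ X ω) (hY0 : ∀ᵐ ω ∂μ, 0 ≤ Y ω) {s : ℝ} (hs : 0 ≤ s) :
    ∫⁻ ω, ENNReal.ofReal (exp (-s * X ω) * (1 - exp (-s * Y ω))) ∂μ =
      ENNReal.ofReal ((∫ ω, exp (-s * X ω) ∂μ) * (1 - ∫ ω, exp (-s * Y ω) ∂μ)) := by
  have hintX := integrable_exp_neg_mul_of_nonneg hX hX0 hs
  have hintY := integrable_exp_neg_mul_of_nonneg hY hY0 hs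
  have hint : Integrable (fun ω => exp (-s * X ω) * (1 - exp (-s * Y ω))) μ :=
    ((integrable_const 1).sub hintY).bdd_mul hintX.1 <| hX0.mono fun ω hω => by
      rw [norm_of_nonneg (exp_pos _).le]
      exact exp_neg_mul_le_one hs hω
  have hnonneg : 0 ≤ᵐ[μ] fun ω => exp (-s * X ω) * (1 - exp (-s * Y ω)) :=
    hY0.mono fun ω hω => mul_nonneg (exp_pos _).le (sub_nonneg.2 (exp_neg_mul_le_one hs hω))
  have hexp : IndepFun (fun ω => exp (-s * X ω)) (fun ω => exp (-s * Y ω)) μ :=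
    h.comp (φ := fun x => exp (-s * x)) (ψ := fun x => exp (-s * x)) (by fun_prop) (by fun_prop)
  rw [← ofReal_integral_eq_lintegral_ofReal hint hnonneg,
    hexp.integral_mul_one_sub hintX.1 hintY]

end ProbabilityTheory

/-- Ergodic rate formula: for independent nonnegative `S` (signal) and `I`
(interference) and noise power `σ² > 0`,
`E[ln(1 + S/(I+σ²))] = ∫_0^∞ (e^{-sσ²}/s) E[e^{-sI}] (1 - E[e^{-sS}]) ds`,
both sides in `[0,∞]`. -/
theorem ergodic_rate_laplace_formula
    {Ω : Type*} [MeasurableSpace Ω] (P : Measure Ω) [IsProbabilityMeasure P]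
    (S I : Ω → ℝ) (hS : Measurable S) (hI : Measurable I)
    (hSpos : ∀ ω, 0 ≤ S ω) (hIpos : ∀ ω, 0 ≤ I ω)
    (hindep : IndepFun S I P) (σ2 : ℝ) (hσ2 : 0 < σ2) :
    ∫⁻ ω, ENNReal.ofReal (Real.log (1 + S ω / (I ω + σ2))) ∂P =
      ∫⁻ s in Set.Ioi (0 : ℝ),
        ENNReal.ofReal ((Real.exp (-s * σ2) / s) * (∫ ω, Real.exp (-s * I ω) ∂P) *
          (1 - ∫ ω, Real.exp (-s * S ω) ∂P)) := by
  simp_rw [fun ω => ofReal_log_one_add_div_eq_lintegral (add_pos_of_nonneg_of_pos (hIpos ω) hσ2)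
    (hSpos ω)]
  rw [lintegral_lintegral_swap (by fun_prop)]
  refine setLIntegral_congr_fun measurableSet_Ioi fun s (hs : 0 < s) => ?_
  have hfactor : ∀ ω, ENNReal.ofReal (exp (-s * (I ω + σ2)) * (1 - exp (-s * S ω)) / s) =
      ENNReal.ofReal (exp (-s * σ2) / s) *
        ENNReal.ofReal (exp (-s * I ω) * (1 - exp (-s * S ω))) := fun ω => by
    rw [← ENNReal.ofReal_mul (by positivity), mul_add, exp_add]
    congr 1
    ring
  simp_rw [hfactor]
  rw [lintegral_const_mul _ (by fun_prop),
    hindep.symm.lintegral_ofReal_exp_neg_mul_mul_one_sub hI.aemeasurable hS.aemeasurable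
      (.of_forall hIpos) (.of_forall hSpos) hs.le,
    ← ENNReal.ofReal_mul (by positivity), mul_assoc]
end
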